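/- arXiv:1810.03559 — 3 statements merged into one kernel-verified Lean document; each statement's English description precedes it below -/
import Mathlib

section
/- Suppose R is a dark equivalence relation (no infinite c.e. transversal, infinitely many classes) having a computable equivalence class [b]_R with [b]_R ≠ [a]_R for some a. Then R is not finitely minimal: the collapse S = R_{col(a,b)} satisfies S <_c R and S has infinitely many classes. -/
/-!
Sending the (computable) class of `b` to `a` reduces `R_{col(a,b)}` to `R`. Conversely, a reduction
of `R` to the collapse composed with this map is a computable self-reduction `p` of `R` whose image
misses the class of `b`; then the orbit `b, p b, p (p b), …` meets each class at most once, so it is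
an infinite c.e. transversal, contradicting darkness.
-/

/-- Computable reducibility between binary relations on ℕ: `R ≤_c S`. -/
def CRed (R S : ℕ → ℕ → Prop) : Prop :=
  ∃ f : ℕ → ℕ, Computable f ∧ ∀ x y, R x y ↔ S (f x) (f y)

/-- `R` has infinitely many equivalence classes. -/
def InfClasses (R : ℕ → ℕ → Prop) : Prop :=
  ∀ F : Finset ℕ, ∃ z, ∀ x ∈ F, ¬ R z x

/-- `R` has an infinite computably enumerable transversal. -/
def HasCeTransversal (R : ℕ → ℕ → Prop) : Prop :=
  ∃ A : Set ℕ, A.Infinite ∧ REPred (· ∈ A) ∧ ∀ x ∈ A, ∀ y ∈ A, x ≠ y → ¬ R x y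

/-- `R` is dark: infinitely many classes but no infinite c.e. transversal. -/
def Dark (R : ℕ → ℕ → Prop) : Prop := InfClasses R ∧ ¬ HasCeTransversal R

/-- The collapse of `R` at `(x, y)`: merge the classes of `x` and `y`. -/
def Collapse (R : ℕ → ℕ → Prop) (x y : ℕ) : ℕ → ℕ → Prop :=
  fun u v => R u v ∨ ((R u x ∨ R u y) ∧ (R v x ∨ R v y))

theorem Computable.iterate_apply {α : Type*} [Primcodable α] {p : α → α} (hp : Computable p)
    (x : α) : Computable fun n : ℕ => p^[n] x :=
  (Computable.nat_rec (g := fun _ : ℕ => x) (h := fun _ (q : ℕ × α) => p q.2) Computable.id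
    (Computable.const x) (hp.comp (Computable.snd.comp Computable.snd)).to₂).of_eq fun n => by
    induction n <;> simp_all [Function.iterate_succ_apply']

theorem Computable.rePred_mem_range {α : Type*} [Primcodable α] [DecidableEq α] {f : ℕ → α}
    (hf : Computable f) : REPred (· ∈ Set.range f) := by
  have hsearch : Partrec fun x => Nat.rfind fun n => Part.some (decide (f n = x)) :=
    Partrec.rfind (Computable₂.partrec₂
      (Primrec.eq.decide.to_comp.comp (hf.comp Computable.snd) Computable.fst))
  refine hsearch.dom_re.of_eq fun x => Nat.rfind_dom.trans ?_
  simp only [Part.mem_some_iff, Bool.true_eq, decide_eq_true_eq, Part.some_dom, implies_true,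
    and_true, Set.mem_range]

theorem InfClasses.collapse {R : ℕ → ℕ → Prop} (h : InfClasses R) (a b : ℕ) :
    InfClasses (Collapse R a b) := by
  intro F
  obtain ⟨z, hz⟩ := h (insert a (insert b F))
  refine ⟨z, fun x hx => ?_⟩
  rintro (hzx | ⟨hza | hzb, -⟩)
  · exact hz x (by simp [hx]) hzx
  · exact hz a (by simp) hza
  · exact hz b (by simp) hzb

open Classical in
noncomputable def collapseMap (R : ℕ → ℕ → Prop) (a b x : ℕ) : ℕ :=
  if R x b then a else x

section Collapse

variable {R : ℕ → ℕ → Prop}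

open Classical in
theorem computable_collapseMap (a : ℕ) {b : ℕ} (h : ComputablePred (R · b)) :
    Computable (collapseMap R a b) :=
  ComputablePred.ite (Computable.const a) Computable.id h

theorem collapseMap_not_rel {a b : ℕ} (hab : ¬ R a b) (x : ℕ) :
    ¬ R (collapseMap R a b x) b := by
  unfold collapseMap
  split_ifs with hx
  exacts [hab, hx]

theorem collapse_iff_collapseMap (hR : Equivalence R) (a b x y : ℕ) :
    Collapse R a b x y ↔ R (collapseMap R a b x) (collapseMap R a b y) := by
  unfold Collapse collapseMap
  by_cases hx : R x b <;> by_cases hy : R y b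
  · rw [if_pos hx, if_pos hy]
    exact iff_of_true (Or.inr ⟨Or.inr hx, Or.inr hy⟩) (hR.refl a)
  · rw [if_pos hx, if_neg hy]
    refine ⟨?_, fun hay => Or.inr ⟨Or.inr hx, Or.inl (hR.symm hay)⟩⟩
    rintro (hxy | ⟨-, hya | hyb⟩)
    exacts [absurd (hR.trans (hR.symm hxy) hx) hy, hR.symm hya, absurd hyb hy]
  · rw [if_neg hx, if_pos hy]
    refine ⟨?_, fun hxa => Or.inr ⟨Or.inl hxa, Or.inr hy⟩⟩
    rintro (hxy | ⟨hxa | hxb, -⟩)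
    exacts [absurd (hR.trans hxy hy) hx, hxa, absurd hxb hx]
  · rw [if_neg hx, if_neg hy]
    refine ⟨?_, Or.inl⟩
    rintro (hxy | ⟨hxa | hxb, hya | hyb⟩)
    exacts [hxy, hR.trans hxa (hR.symm hya), absurd hyb hy, absurd hxb hx, absurd hxb hx]

theorem cRed_collapse (hR : Equivalence R) (a : ℕ) {b : ℕ} (h : ComputablePred (R · b)) :
    CRed (Collapse R a b) R :=
  ⟨collapseMap R a b, computable_collapseMap a h, collapse_iff_collapseMap hR a b⟩

end Collapse

section Orbit

variable {R : ℕ → ℕ → Prop} {p : ℕ → ℕ}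

theorem rel_iterate_iff (hred : ∀ x y, R x y ↔ R (p x) (p y)) (k x y : ℕ) :
    R (p^[k] x) (p^[k] y) ↔ R x y := by
  induction k with
  | zero => rfl
  | succ k ih => rw [Function.iterate_succ_apply', Function.iterate_succ_apply', ← hred, ih]

theorem not_rel_iterate_of_lt (hR : Equivalence R) (hred : ∀ x y, R x y ↔ R (p x) (p y)) {b : ℕ}
    (hb : ∀ x, ¬ R (p x) b) {m n : ℕ} (hmn : m < n) : ¬ R (p^[m] b) (p^[n] b) := by
  obtain ⟨d, rfl⟩ := Nat.exists_eq_add_of_lt hmn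
  rw [Nat.add_assoc, Function.iterate_add_apply, rel_iterate_iff hred,
    Function.iterate_succ_apply']
  exact fun h => hb _ (hR.symm h)

theorem hasCeTransversal_of_reduction_avoiding (hR : Equivalence R) (hp : Computable p)
    (hred : ∀ x y, R x y ↔ R (p x) (p y)) {b : ℕ} (hb : ∀ x, ¬ R (p x) b) :
    HasCeTransversal R := by
  have hdistinct : ∀ m n, m ≠ n → ¬ R (p^[m] b) (p^[n] b) := by
    intro m n hmn
    rcases hmn.lt_or_gt with hlt | hlt
    · exact not_rel_iterate_of_lt hR hred hb hlt
    · exact fun h => not_rel_iterate_of_lt hR hred hb hlt (hR.symm h)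
  have hinj : Function.Injective fun n => p^[n] b := fun m n h =>
    by_contra fun hmn => hdistinct m n hmn (by rw [show p^[m] b = p^[n] b from h]; exact hR.refl _)
  refine ⟨Set.range fun n => p^[n] b, Set.infinite_range_of_injective hinj,
    (hp.iterate_apply b).rePred_mem_range, ?_⟩
  rintro _ ⟨m, rfl⟩ _ ⟨n, rfl⟩ hne
  exact hdistinct m n fun h => hne (h ▸ rfl)

end Orbit

theorem dark_with_computable_class_not_finitely_minimal
    (R : ℕ → ℕ → Prop) (hR : Equivalence R) (hdark : Dark R) (a b : ℕ)
    (hab : ¬ R a b) (hcomp : ComputablePred (fun x => R x b)) :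
    (CRed (Collapse R a b) R ∧ ¬ CRed R (Collapse R a b)) ∧
      InfClasses (Collapse R a b) := by
  refine ⟨⟨cRed_collapse hR a hcomp, ?_⟩, hdark.1.collapse a b⟩
  rintro ⟨g, hg, hgred⟩
  exact hdark.2 <| hasCeTransversal_of_reduction_avoiding hR
    ((computable_collapseMap a hcomp).comp hg)
    (fun x y => (hgred x y).trans (collapse_iff_collapseMap hR a b _ _))
    (fun x => collapseMap_not_rel hab _)
end

section
/- Let R, S be equivalence relations with infinitely many classes. If there is an S-computable reduction of S to R (i.e., S ≤_{deg_T(S)} R), then R is not S-dark: R has an infinite S-c.e. transversal. -/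
/-- Partial functions on ℕ computable relative to an oracle `O : ℕ → ℕ`. -/
inductive RecIn (O : ℕ → ℕ) : (ℕ →. ℕ) → Prop
  | oracle : RecIn O (O : ℕ →. ℕ)
  | zero : RecIn O (pure 0)
  | succ : RecIn O ↑Nat.succ
  | left : RecIn O ↑fun n : ℕ => n.unpair.1
  | right : RecIn O ↑fun n : ℕ => n.unpair.2
  | pair {f g} : RecIn O f → RecIn O g → RecIn O fun n => Nat.pair <$> f n <*> g n
  | comp {f g} : RecIn O f → RecIn O g → RecIn O fun n => g n >>= f
  | prec {f g} : RecIn O f → RecIn O g → RecIn O (Nat.unpaired fun a n =>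
      n.rec (f a) fun y IH => do let i ← IH; g (Nat.pair a (Nat.pair y i)))
  | rfind {f} : RecIn O f → RecIn O fun a =>
      Nat.rfind fun n => (fun m => m = 0) <$> f (Nat.pair a n)

open Classical in
/-- The characteristic function (on codes of pairs) of a binary relation on ℕ. -/
noncomputable def chi (R : ℕ → ℕ → Prop) : ℕ → ℕ :=
  fun n => if R n.unpair.1 n.unpair.2 then 1 else 0

/-- `A` is c.e. relative to the oracle `O`. -/
def CeIn (O : ℕ → ℕ) (A : Set ℕ) : Prop :=
  ∃ f : ℕ →. ℕ, RecIn O f ∧ ∀ n, A n ↔ (f n).Dom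

/-- `R` is `O`-dark: infinitely many classes but no infinite `O`-c.e. transversal. -/
def DarkIn (O : ℕ → ℕ) (R : ℕ → ℕ → Prop) : Prop :=
  InfClasses R ∧ ¬ ∃ A : Set ℕ, A.Infinite ∧ CeIn O A ∧
    ∀ x ∈ A, ∀ y ∈ A, x ≠ y → ¬ R x y

/-- `R` and `S` are mutually dark. -/
def MutuallyDark (R S : ℕ → ℕ → Prop) : Prop :=
  DarkIn (chi S) R ∧ DarkIn (chi R) S

namespace RecIn

variable {O : ℕ → ℕ}

theorem of_partrec {g : ℕ →. ℕ} (h : Nat.Partrec g) : RecIn O g := by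
  induction h with
  | zero => exact zero
  | succ => exact succ
  | left => exact left
  | right => exact right
  | pair _ _ hf hg => exact pair hf hg
  | comp _ _ hf hg => exact comp hf hg
  | prec _ _ hf hg => exact prec hf hg
  | rfind _ hf => exact rfind hf

theorem of_eq {g h : ℕ →. ℕ} (hg : RecIn O g) (H : ∀ n, g n = h n) : RecIn O h :=
  (funext H : g = h) ▸ hg

end RecIn

def TotalRecIn (O : ℕ → ℕ) (g : ℕ → ℕ) : Prop :=
  RecIn O (g : ℕ →. ℕ)

namespace TotalRecIn

variable {O : ℕ → ℕ} {g h : ℕ → ℕ}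

theorem oracle : TotalRecIn O O :=
  RecIn.oracle

theorem of_computable (hg : Computable g) : TotalRecIn O g :=
  RecIn.of_partrec (Partrec.nat_iff.1 hg)

theorem comp (hg : TotalRecIn O g) (hh : TotalRecIn O h) : TotalRecIn O (g ∘ h) :=
  (RecIn.comp hg hh).of_eq fun n => Part.bind_some (h n) _

theorem pair (hg : TotalRecIn O g) (hh : TotalRecIn O h) :
    TotalRecIn O fun n => Nat.pair (g n) (h n) :=
  (RecIn.pair hg hh).of_eq fun n => by simp [PFun.coe_val, Seq.seq]

theorem comp₂ {c : ℕ → ℕ → ℕ} (hc : Computable₂ c) (hg : TotalRecIn O g)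
    (hh : TotalRecIn O h) : TotalRecIn O fun n => c (g n) (h n) := by
  have hc' : Computable fun p : ℕ => c p.unpair.1 p.unpair.2 :=
    hc.comp (Computable.fst.comp Computable.unpair) (Computable.snd.comp Computable.unpair)
  simpa [Function.comp_def] using (of_computable hc').comp (pair hg hh)

theorem sum_range (hg : TotalRecIn O g) :
    TotalRecIn O fun p => ∑ w ∈ Finset.range p.unpair.2, g (Nat.pair p.unpair.1 w) := by
  have hstep : TotalRecIn O fun m =>
      m.unpair.2.unpair.2 + g (Nat.pair m.unpair.1 m.unpair.2.unpair.1) :=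
    comp₂ Primrec.nat_add.to_comp
      (of_computable (Primrec.snd.comp (Primrec.unpair.comp
        (Primrec.snd.comp Primrec.unpair))).to_comp)
      (hg.comp (of_computable (Primrec₂.natPair.comp (Primrec.fst.comp Primrec.unpair)
        (Primrec.fst.comp (Primrec.unpair.comp (Primrec.snd.comp Primrec.unpair)))).to_comp))
  refine (RecIn.prec (of_computable (Computable.const 0)) hstep).of_eq fun p => ?_
  obtain ⟨a, n, rfl⟩ : ∃ a n, p = Nat.pair a n := ⟨_, _, (Nat.pair_unpair p).symm⟩
  simp only [Nat.unpaired, Nat.unpair_pair, PFun.coe_val]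
  induction n with
  | zero => rfl
  | succ n ih =>
    simp only [Part.bind_eq_bind] at ih ⊢
    rw [ih, Part.bind_some, Finset.sum_range_succ]

end TotalRecIn

def DecidableIn (O : ℕ → ℕ) (A : Set ℕ) : Prop :=
  ∃ g : ℕ → ℕ, TotalRecIn O g ∧ ∀ n, n ∈ A ↔ g n = 0

namespace DecidableIn

variable {O : ℕ → ℕ} {A B : Set ℕ}

theorem of_eq_zero {g : ℕ → ℕ} (hg : TotalRecIn O g) : DecidableIn O {n | g n = 0} :=
  ⟨g, hg, fun _ => Iff.rfl⟩

theorem preimage (hA : DecidableIn O A) {h : ℕ → ℕ} (hh : TotalRecIn O h) :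
    DecidableIn O (h ⁻¹' A) :=
  let ⟨g, hg, hgA⟩ := hA
  ⟨g ∘ h, hg.comp hh, fun n => hgA (h n)⟩

theorem inter (hA : DecidableIn O A) (hB : DecidableIn O B) : DecidableIn O (A ∩ B) :=
  let ⟨g, hg, hgA⟩ := hA
  let ⟨h, hh, hhB⟩ := hB
  ⟨fun n => g n + h n, TotalRecIn.comp₂ Primrec.nat_add.to_comp hg hh, fun n => by
    simp [hgA, hhB]⟩

theorem setOf_eq {g h : ℕ → ℕ} (hg : TotalRecIn O g) (hh : TotalRecIn O h) :
    DecidableIn O {n | g n = h n} := by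
  have hc : Computable₂ fun a b : ℕ => if a = b then 0 else 1 :=
    (Primrec.ite Primrec.eq (Primrec.const 0) (Primrec.const 1)).to_comp
  exact ⟨_, TotalRecIn.comp₂ hc hg hh, fun n => by simp⟩

theorem forall_lt (hA : DecidableIn O A) :
    DecidableIn O {p | ∀ w < p.unpair.2, Nat.pair p.unpair.1 w ∈ A} :=
  let ⟨g, hg, hgA⟩ := hA
  ⟨_, hg.sum_range, fun p => by simp [hgA, Finset.sum_eq_zero_iff]⟩

end DecidableIn

namespace CeIn

variable {O : ℕ → ℕ}

theorem exists_pair {B : Set ℕ} (hB : DecidableIn O B) :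
    CeIn O {n | ∃ k, Nat.pair n k ∈ B} := by
  obtain ⟨g, hg, hgB⟩ := hB
  exact ⟨_, RecIn.rfind hg, fun n => Iff.trans (exists_congr fun k => by simp [PFun.coe_val, hgB])
    Nat.rfind_dom.symm⟩

theorem image {A : Set ℕ} (hA : DecidableIn O A) {f : ℕ → ℕ} (hf : TotalRecIn O f) :
    CeIn O (f '' A) := by
  have hfst : TotalRecIn O fun p => p.unpair.1 :=
    .of_computable (Primrec.fst.comp Primrec.unpair).to_comp
  have hsnd : TotalRecIn O fun p => p.unpair.2 :=
    .of_computable (Primrec.snd.comp Primrec.unpair).to_comp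
  convert exists_pair ((hA.preimage hsnd).inter (DecidableIn.setOf_eq (hf.comp hsnd) hfst))
  ext n
  simp

end CeIn

/-- The least element of each `S`-class. -/
def minReps (S : ℕ → ℕ → Prop) : Set ℕ :=
  {z | ∀ w < z, ¬ S z w}

section minReps

variable {S : ℕ → ℕ → Prop}

theorem exists_mem_minReps_rel (hS : Equivalence S) (n : ℕ) : ∃ m ∈ minReps S, S n m := by
  classical
  have hex : ∃ w, S n w := ⟨n, hS.refl n⟩
  refine ⟨Nat.find hex, fun w hw hSw => ?_, Nat.find_spec hex⟩
  exact Nat.find_min hex hw (hS.trans (Nat.find_spec hex) hSw)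

theorem minReps_infinite (hS : Equivalence S) (hSinf : InfClasses S) : (minReps S).Infinite := by
  intro hfin
  obtain ⟨z, hz⟩ := hSinf hfin.toFinset
  obtain ⟨m, hm, hzm⟩ := exists_mem_minReps_rel hS z
  exact hz m (hfin.mem_toFinset.2 hm) hzm

theorem pairwise_not_rel_minReps (hS : ∀ x y, S x y → S y x) :
    (minReps S).Pairwise fun x y => ¬ S x y := by
  intro z hz w hw hne hzw
  rcases hne.lt_or_gt with h | h
  · exact hw z h (hS z w hzw)
  · exact hz w h hzw

theorem decidableIn_minReps (S : ℕ → ℕ → Prop) : DecidableIn (chi S) (minReps S) := by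
  have hdiag : TotalRecIn (chi S) fun z => Nat.pair z z :=
    .of_computable (Primrec₂.natPair.comp Primrec.id Primrec.id).to_comp
  convert ((DecidableIn.of_eq_zero TotalRecIn.oracle).forall_lt).preimage hdiag
  ext z
  simp [minReps, chi]

end minReps

section reduction

variable {R S : ℕ → ℕ → Prop} {f : ℕ → ℕ} {A : Set ℕ}

theorem injOn_of_reduction (hS : ∀ x, S x x) (hred : ∀ x y, S x y ↔ R (f x) (f y))
    (hA : A.Pairwise fun x y => ¬ S x y) : A.InjOn f := by
  intro z hz w hw hzw
  by_contra hne
  exact hA hz hw hne ((hred z w).2 (hzw ▸ (hred z z).1 (hS z)))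

theorem pairwise_not_rel_image_of_reduction (hred : ∀ x y, S x y ↔ R (f x) (f y))
    (hA : A.Pairwise fun x y => ¬ S x y) : (f '' A).Pairwise fun x y => ¬ R x y := by
  rintro _ ⟨z, hz, rfl⟩ _ ⟨w, hw, rfl⟩ hne
  exact mt (hred z w).2 (hA hz hw fun h => hne (congrArg f h))

end reduction

theorem reduction_implies_not_Sdark_general (R S : ℕ → ℕ → Prop)
    (hS : Equivalence S)
    (hSinf : InfClasses S)
    (f : ℕ → ℕ) (hf : RecIn (chi S) (f : ℕ →. ℕ))
    (hred : ∀ x y, S x y ↔ R (f x) (f y)) :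
    ∃ A : Set ℕ, A.Infinite ∧ CeIn (chi S) A ∧
      ∀ x ∈ A, ∀ y ∈ A, x ≠ y → ¬ R x y := by
  have hT : (minReps S).Pairwise fun x y => ¬ S x y :=
    pairwise_not_rel_minReps fun _ _ => hS.symm
  exact ⟨f '' minReps S, (minReps_infinite hS hSinf).image (injOn_of_reduction hS.refl hred hT),
    CeIn.image (decidableIn_minReps S) hf, pairwise_not_rel_image_of_reduction hred hT⟩

theorem reduction_implies_not_Sdark (R S : ℕ → ℕ → Prop)
    (hR : Equivalence R) (hS : Equivalence S)
    (hRinf : InfClasses R) (hSinf : InfClasses S)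
    (f : ℕ → ℕ) (hf : RecIn (chi S) (f : ℕ →. ℕ))
    (hred : ∀ x y, S x y ↔ R (f x) (f y)) :
    ∃ A : Set ℕ, A.Infinite ∧ CeIn (chi S) A ∧
      ∀ x ∈ A, ∀ y ∈ A, x ≠ y → ¬ R x y :=
  reduction_implies_not_Sdark_general R S hS hSinf f hf hred
end

section
/- There is an equivalence relation R that is a 2-c.e. (d.c.e.) relation, not computably enumerable, such that Id ≤_c R via a computable function whose range intersects every R-equivalence class. (Hence the Inversion Lemma fails outside ceers.) Concretely, fixing a noncomputable c.e. set X and a computable partition of ℕ into {a_i}, {b_i}, {c_i}, {d_i}, let R have classes {a_i, c_i}, {b_i, d_i} when i ∉ X and classes {a_i, d_i}, {b_i, c_i} when i ∈ X; then R is d.c.e., not c.e., Id ≤_c R via i-even/odd ↦ a_i or b_i, this reduction hits all classes, yet R ≰_c Id. -/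
/-!
Number the elements of block `i` as `a_i = 4i`, `b_i = 4i + 1`, `c_i = 4i + 2`, `d_i = 4i + 3`.
For a c.e. set `X`, let `R` pair `a_i, c_i` and `b_i, d_i` when `i ∉ X`, but `a_i, d_i` and
`b_i, c_i` when `i ∈ X`. Both pairings are computable and `R` follows one of them on the c.e. set
of blocks in `X` and the other one elsewhere, which makes `R` d.c.e. Each class contains exactly one of `a_i, b_i`, so
`x ↦ a_{x/2}` or `b_{x/2}` (by parity) is a reduction of `Id` hitting every class. But
`i ∉ X ↔ R a_i c_i` and `i ∈ X ↔ R a_i d_i`, so `R` being c.e. would make `X` co-c.e., and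
`R ≤_c Id` would make `R`, hence `X`, computable.
-/

open Nat.Partrec (Code)

section Computability

variable {α β : Type*} [Primcodable α] [Primcodable β]

protected theorem ComputablePred.comp {p : β → Prop} (hp : ComputablePred p) {f : α → β}
    (hf : Computable f) : ComputablePred fun a => p (f a) := by
  obtain ⟨_, hp⟩ := hp
  exact ⟨fun a => inferInstance, hp.comp hf⟩

protected theorem REPred.comp {p : β → Prop} (hp : REPred p) {f : α → β} (hf : Computable f) :
    REPred fun a => p (f a) :=
  Partrec.comp hp hf

theorem Computable.computablePred_eq {f g : α → ℕ} (hf : Computable f) (hg : Computable g) :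
    ComputablePred fun a => f a = g a :=
  Computable.computablePred ((PrimrecRel.decide Primrec.eq).to_comp.comp hf hg)

theorem REPred.and_of_computablePred {p q : α → Prop} (hp : ComputablePred p) (hq : REPred q) :
    REPred fun a => p a ∧ q a := by
  classical
  refine (Partrec.cond hp.decide hq Partrec.none).of_eq fun a => Part.ext fun u => ?_
  by_cases h : p a <;> simp [h, Part.mem_assert_iff]

theorem REPred.or_of_computablePred {p q : α → Prop} (hp : ComputablePred p) (hq : REPred q) :
    REPred fun a => p a ∨ q a := by
  classical
  refine (Partrec.cond hp.decide (Decidable.Partrec.const' (Part.some ())) hq).of_eq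
    fun a => Part.ext fun u => ?_
  by_cases h : p a <;> simp [h, Part.mem_assert_iff]

theorem exists_rePred_sdiff_of_piecewise {s p q : α → Prop} (hs : REPred s)
    (hp : ComputablePred p) (hq : ComputablePred q) :
    ∃ A B : α → Prop, REPred A ∧ REPred B ∧
      ∀ a, (s a ∧ p a ∨ ¬ s a ∧ q a) ↔ A a ∧ ¬ B a := by
  refine ⟨fun a => q a ∨ p a ∧ s a, fun a => ¬ p a ∧ s a,
    REPred.or_of_computablePred hq (REPred.and_of_computablePred hp hs),
    REPred.and_of_computablePred hp.not hs, fun a => ?_⟩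
  tauto

theorem CRed.computablePred_of_eq {R : ℕ → ℕ → Prop} (h : CRed R Eq) :
    ComputablePred fun p : ℕ × ℕ => R p.1 p.2 := by
  obtain ⟨f, hf, hR⟩ := h
  exact (Computable.computablePred_eq (hf.comp .fst) (hf.comp .snd)).of_eq
    fun p => (hR p.1 p.2).symm

theorem exists_rePred_not_computablePred :
    ∃ X : ℕ → Prop, REPred X ∧ ¬ ComputablePred X := by
  refine ⟨fun n => (Code.eval (Denumerable.ofNat Code n) 0).Dom,
    (ComputablePred.halting_problem_re 0).comp (Computable.ofNat Code), fun h => ?_⟩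
  exact ComputablePred.halting_problem 0 ((h.comp Computable.encode).of_eq fun c => by simp)

end Computability

namespace SwitchRel

/-- The pairing `{a_i, d_i}, {b_i, c_i}`: the code of the pair containing `n`. -/
def inCode (n : ℕ) : ℕ := 2 * (n / 4) + (n % 4 + 1) / 2 % 2

/-- The pairing `{a_i, c_i}, {b_i, d_i}`: the code of the pair containing `n`. -/
def outCode (n : ℕ) : ℕ := 2 * (n / 4) + n % 2

theorem primrec_blockCode {f : ℕ → ℕ} (hf : Primrec f) : Primrec fun n => 2 * (n / 4) + f n :=
  Primrec.nat_add.comp (Primrec.nat_mul.comp (.const 2) (Primrec.nat_div.comp .id (.const 4))) hf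

theorem primrec_inCode : Primrec inCode :=
  primrec_blockCode <| Primrec.nat_mod.comp
    (Primrec.nat_div.comp (Primrec.nat_add.comp (Primrec.nat_mod.comp .id (.const 4)) (.const 1))
      (.const 2)) (.const 2)

theorem primrec_outCode : Primrec outCode :=
  primrec_blockCode <| Primrec.nat_mod.comp .id (.const 2)

theorem primrec_blockPair (r : ℕ) : Primrec fun i => (4 * i, 4 * i + r) :=
  have h4 : Primrec fun i => 4 * i := Primrec.nat_mul.comp (.const 4) .id
  h4.pair (Primrec.nat_add.comp h4 (.const r))

def rep (x : ℕ) : ℕ := 2 * x - x % 2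

theorem primrec_rep : Primrec rep :=
  Primrec.nat_sub.comp (Primrec.nat_mul.comp (.const 2) .id) (Primrec.nat_mod.comp .id (.const 2))

variable (X : ℕ → Prop) [DecidablePred X]

def classCode (n : ℕ) : ℕ := if X (n / 4) then inCode n else outCode n

def switchRel (n m : ℕ) : Prop := classCode X n = classCode X m

theorem classCode_rep (x : ℕ) : classCode X (rep x) = x := by
  unfold classCode inCode outCode rep
  split_ifs <;> omega

theorem classCode_div_two (n : ℕ) : classCode X n / 2 = n / 4 := by
  unfold classCode inCode outCode
  split_ifs <;> omega

theorem switchRel_iff (n m : ℕ) :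
    switchRel X n m ↔ X (n / 4) ∧ inCode n = inCode m ∨ ¬ X (n / 4) ∧ outCode n = outCode m := by
  have inCode_block : inCode n = inCode m → n / 4 = m / 4 := by unfold inCode; omega
  have outCode_block : outCode n = outCode m → n / 4 = m / 4 := by unfold outCode; omega
  constructor
  · intro h
    have hm : n / 4 = m / 4 := by rw [← classCode_div_two X n, ← classCode_div_two X m, h]
    unfold switchRel classCode at h
    rw [← hm] at h
    by_cases hX : X (n / 4) <;> simp_all
  · rintro (⟨hX, h⟩ | ⟨hX, h⟩)
    · unfold switchRel classCode
      rw [← inCode_block h, if_pos hX, if_pos hX, h]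
    · unfold switchRel classCode
      rw [← outCode_block h, if_neg hX, if_neg hX, h]

theorem switchRel_ac_iff (i : ℕ) : switchRel X (4 * i) (4 * i + 2) ↔ ¬ X i := by
  have hi : 4 * i / 4 = i := by omega
  rw [switchRel_iff, hi]
  by_cases hX : X i <;> simp [hX, inCode, outCode] <;> omega

theorem switchRel_ad_iff (i : ℕ) : switchRel X (4 * i) (4 * i + 3) ↔ X i := by
  have hi : 4 * i / 4 = i := by omega
  rw [switchRel_iff, hi]
  by_cases hX : X i <;> simp [hX, inCode, outCode] <;> omega

theorem equivalence_switchRel : Equivalence (switchRel X) :=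
  InvImage.equivalence Eq (classCode X) eq_equivalence

theorem exists_rePred_sdiff_switchRel (hX : REPred X) :
    ∃ A B : ℕ × ℕ → Prop, REPred A ∧ REPred B ∧
      ∀ p : ℕ × ℕ, switchRel X p.1 p.2 ↔ A p ∧ ¬ B p := by
  obtain ⟨A, B, hA, hB, hAB⟩ := exists_rePred_sdiff_of_piecewise
    (hX.comp (Primrec.nat_div.comp .fst (.const 4)).to_comp)
    (Computable.computablePred_eq (primrec_inCode.comp .fst).to_comp
      (primrec_inCode.comp .snd).to_comp)
    (Computable.computablePred_eq (primrec_outCode.comp .fst).to_comp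
      (primrec_outCode.comp .snd).to_comp)
  exact ⟨A, B, hA, hB, fun p => (switchRel_iff X p.1 p.2).trans (hAB p)⟩

theorem not_rePred_switchRel (hX : REPred X) (hXc : ¬ ComputablePred X) :
    ¬ REPred fun p : ℕ × ℕ => switchRel X p.1 p.2 := fun h =>
  hXc <| ComputablePred.computable_iff_re_compl_re'.2
    ⟨hX, (h.comp (primrec_blockPair 2).to_comp).of_eq (switchRel_ac_iff X)⟩

theorem not_cRed_switchRel_eq (hX : ¬ ComputablePred X) : ¬ CRed (switchRel X) Eq := fun h =>
  hX <| (h.computablePred_of_eq.comp (primrec_blockPair 3).to_comp).of_eq (switchRel_ad_iff X)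

end SwitchRel

theorem inversion_fails_for_dce :
    ∃ R : ℕ → ℕ → Prop, Equivalence R ∧
      (∃ A B : ℕ × ℕ → Prop, REPred A ∧ REPred B ∧
        ∀ p : ℕ × ℕ, R p.1 p.2 ↔ A p ∧ ¬ B p) ∧
      ¬ REPred (fun p : ℕ × ℕ => R p.1 p.2) ∧
      (∃ f : ℕ → ℕ, Computable f ∧ (∀ x y, x = y ↔ R (f x) (f y)) ∧
        ∀ y, ∃ x, R (f x) y) ∧
      ¬ CRed R Eq := by
  open SwitchRel in
  classical
  obtain ⟨X, hX, hXc⟩ := exists_rePred_not_computablePred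
  refine ⟨switchRel X, equivalence_switchRel X, exists_rePred_sdiff_switchRel X hX,
    not_rePred_switchRel X hX hXc, ⟨rep, primrec_rep.to_comp, fun x y => ?_, fun y => ?_⟩,
    not_cRed_switchRel_eq X hXc⟩
  · rw [switchRel, classCode_rep, classCode_rep]
  · exact ⟨classCode X y, classCode_rep X _⟩
end
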